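/- arXiv:2012.00609 — 2 statements merged into one kernel-verified Lean document; each statement's English description precedes it below -/
import Mathlib

section
/- Let δ, γ > 0, and let x, x̆ : [0,∞) → ℝ be functions with values in [x₁, x̄] where x₁ satisfies c_* - p x ≤ -α for x ∈ [x₁, x̄] and some α > 0. Then for h > 0 and K₀ > 0, the quantity r h + ∫₀^∞ e^{-δt}(c - p x̆(t))(K₀ + h)e^{-γt} dt - ∫₀^∞ e^{-δt}(c - p x(t)) K₀ e^{-γt} dt is at most (δ+γ)^{-1}(-hα + K₀ p x̄). In particular, if h = n K₀ with n α > p x̄, this quantity is negative. -/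
/-! Merging the discount factors into `e^{-(δ+γ)t}`, each integral is `(δ+γ)⁻¹` times an
exponentially weighted mean of the running cost `c - p ξ`. That cost is at most `-α - r(δ+γ)`
along `x̆` and at least `c - p x̄` along `x`; the `-r(δ+γ)` part of the first bound cancels the
upfront term `r h` up to a nonpositive remainder. -/

open Set MeasureTheory

lemma integral_exp_neg_mul_Ioi_zero {κ : ℝ} (hκ : 0 < κ) :
    ∫ t in Ioi (0:ℝ), Real.exp (-κ * t) = κ⁻¹ := by
  rw [integral_exp_mul_Ioi (neg_lt_zero.2 hκ)]
  simp

lemma integrableOn_mul_exp_neg_mul_Ioi {κ a b : ℝ} (hκ : 0 < κ) {f : ℝ → ℝ}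
    (hf : Measurable f) (hab : ∀ t ∈ Ioi (0:ℝ), f t ∈ Icc a b) :
    IntegrableOn (fun t => f t * Real.exp (-κ * t)) (Ioi 0) :=
  (integrableOn_exp_mul_Ioi (neg_lt_zero.2 hκ) 0).bdd_mul hf.aestronglyMeasurable
    ((ae_restrict_mem measurableSet_Ioi).mono fun t ht =>
      abs_le_max_abs_abs (hab t ht).1 (hab t ht).2)

lemma setIntegral_mul_exp_neg_mul_mem_Icc {κ a b : ℝ} (hκ : 0 < κ) {f : ℝ → ℝ}
    (hf : Measurable f) (hab : ∀ t ∈ Ioi (0:ℝ), f t ∈ Icc a b) :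
    ∫ t in Ioi (0:ℝ), f t * Real.exp (-κ * t) ∈ Icc (a / κ) (b / κ) := by
  have hexp := integrableOn_exp_mul_Ioi (neg_lt_zero.2 hκ) 0
  have hf_int := integrableOn_mul_exp_neg_mul_Ioi hκ hf hab
  have hconst (d : ℝ) : ∫ t in Ioi (0:ℝ), d * Real.exp (-κ * t) = d / κ := by
    rw [integral_const_mul, integral_exp_neg_mul_Ioi_zero hκ, div_eq_mul_inv]
  constructor
  · rw [← hconst]
    exact setIntegral_mono_on (hexp.const_mul a) hf_int measurableSet_Ioi fun t ht =>
      mul_le_mul_of_nonneg_right (hab t ht).1 (Real.exp_pos _).le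
  · rw [← hconst]
    exact setIntegral_mono_on hf_int (hexp.const_mul b) measurableSet_Ioi fun t ht =>
      mul_le_mul_of_nonneg_right (hab t ht).2 (Real.exp_pos _).le

lemma setIntegral_exp_neg_mul_mul_const_mul_exp_neg_mul (δ γ C : ℝ) (g : ℝ → ℝ) :
    ∫ t in Ioi (0:ℝ), Real.exp (-δ * t) * g t * (C * Real.exp (-γ * t))
      = C * ∫ t in Ioi (0:ℝ), g t * Real.exp (-(δ + γ) * t) := by
  rw [← integral_const_mul]
  congr 1 with t
  rw [neg_add, add_mul, Real.exp_add]
  ring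

lemma cost_difference_le {c p r α κ xbar K₀ h I J : ℝ} (hc : 0 ≤ c) (hr : 0 ≤ r)
    (hκ : 0 < κ) (hα : 0 < α) (hK₀ : 0 < K₀) (hh : 0 < h)
    (hI : I ≤ (-α - r * κ) / κ) (hJ : (c - p * xbar) / κ ≤ J) :
    r * h + (K₀ + h) * I - K₀ * J ≤ κ⁻¹ * (-(h * α) + K₀ * p * xbar) := by
  calc r * h + (K₀ + h) * I - K₀ * J
      ≤ r * h + (K₀ + h) * ((-α - r * κ) / κ) - K₀ * ((c - p * xbar) / κ) := by
        gcongr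
    _ = κ⁻¹ * (-(h * α) + K₀ * p * xbar) - κ⁻¹ * (K₀ * α + K₀ * c) - K₀ * r := by
        field_simp
        ring
    _ ≤ κ⁻¹ * (-(h * α) + K₀ * p * xbar) := by
        have : 0 ≤ κ⁻¹ * (K₀ * α + K₀ * c) := by positivity
        nlinarith [mul_nonneg hK₀.le hr]

theorem cost_comparison_general (p c r δ γ α x₁ xbar K₀ h : ℝ)
    (hp : 0 ≤ p) (hc : 0 ≤ c) (hr : 0 ≤ r) (hδ : 0 < δ) (hγ : 0 < γ)
    (hα : 0 < α)
    (hK₀ : 0 < K₀) (hh : 0 < h)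
    (hcs : ∀ ξ ∈ Icc x₁ xbar, c + r * (δ + γ) - p * ξ ≤ -α)
    (x xb : ℝ → ℝ)
    (hx : ∀ t, 0 ≤ t → x t ∈ Icc x₁ xbar) (hxb : ∀ t, 0 ≤ t → xb t ∈ Icc x₁ xbar)
    (hmx : Measurable x) (hmxb : Measurable xb) :
    r * h
      + (∫ t in Ioi (0:ℝ), Real.exp (-δ * t) * (c - p * xb t) * ((K₀ + h) * Real.exp (-γ * t)))
      - (∫ t in Ioi (0:ℝ), Real.exp (-δ * t) * (c - p * x t) * (K₀ * Real.exp (-γ * t)))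
      ≤ (δ + γ)⁻¹ * (-(h * α) + K₀ * p * xbar) ∧
    ∀ n : ℝ, h = n * K₀ → p * xbar < n * α →
      r * h
        + (∫ t in Ioi (0:ℝ), Real.exp (-δ * t) * (c - p * xb t) * ((K₀ + h) * Real.exp (-γ * t)))
        - (∫ t in Ioi (0:ℝ), Real.exp (-δ * t) * (c - p * x t) * (K₀ * Real.exp (-γ * t)))
        < 0 := by
  have hκ : 0 < δ + γ := add_pos hδ hγ
  have hcost (y : ℝ → ℝ) (hy : ∀ t, 0 ≤ t → y t ∈ Icc x₁ xbar) (t : ℝ) (ht : t ∈ Ioi (0:ℝ)) :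
      c - p * y t ∈ Icc (c - p * xbar) (-α - r * (δ + γ)) :=
    ⟨by nlinarith [(hy t ht.le).2], by linarith [hcs _ (hy t ht.le)]⟩
  have hIxb := (setIntegral_mul_exp_neg_mul_mem_Icc hκ (by fun_prop) (hcost xb hxb)).2
  have hIx := (setIntegral_mul_exp_neg_mul_mem_Icc hκ (by fun_prop) (hcost x hx)).1
  simp only [setIntegral_exp_neg_mul_mul_const_mul_exp_neg_mul]
  have key := cost_difference_le hc hr hκ hα hK₀ hh hIxb hIx
  refine ⟨key, fun n hn hnα => key.trans_lt (mul_neg_of_pos_of_neg (inv_pos.2 hκ) ?_)⟩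
  rw [hn]
  nlinarith

/-- Cost-comparison estimate of Lemma 2.1: with `c_* = c + r (δ+γ)` and
`c_* - p ξ ≤ -α` on `[x₁, x̄]`, for trajectories `x, x̆` with values in `[x₁, x̄]`,
`r h + ∫₀^∞ e^{-δt}(c - p x̆ t)(K₀+h)e^{-γt} dt - ∫₀^∞ e^{-δt}(c - p x t) K₀ e^{-γt} dt
  ≤ (δ+γ)⁻¹ (-(h α) + K₀ p x̄)`; in particular if `h = n K₀` with `n α > p x̄` this
quantity is negative. -/
theorem cost_comparison (p c r δ γ α x₁ xbar K₀ h : ℝ)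
    (hp : 0 ≤ p) (hc : 0 ≤ c) (hr : 0 ≤ r) (hδ : 0 < δ) (hγ : 0 < γ)
    (hα : 0 < α) (hx₁ : 0 < x₁) (hx₁bar : x₁ < xbar)
    (hK₀ : 0 < K₀) (hh : 0 < h)
    (hcs : ∀ ξ ∈ Icc x₁ xbar, c + r * (δ + γ) - p * ξ ≤ -α)
    (x xb : ℝ → ℝ)
    (hx : ∀ t, 0 ≤ t → x t ∈ Icc x₁ xbar) (hxb : ∀ t, 0 ≤ t → xb t ∈ Icc x₁ xbar)
    (hmx : Measurable x) (hmxb : Measurable xb) :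
    r * h
      + (∫ t in Ioi (0:ℝ), Real.exp (-δ * t) * (c - p * xb t) * ((K₀ + h) * Real.exp (-γ * t)))
      - (∫ t in Ioi (0:ℝ), Real.exp (-δ * t) * (c - p * x t) * (K₀ * Real.exp (-γ * t)))
      ≤ (δ + γ)⁻¹ * (-(h * α) + K₀ * p * xbar) ∧
    ∀ n : ℝ, h = n * K₀ → p * xbar < n * α →
      r * h
        + (∫ t in Ioi (0:ℝ), Real.exp (-δ * t) * (c - p * xb t) * ((K₀ + h) * Real.exp (-γ * t)))
        - (∫ t in Ioi (0:ℝ), Real.exp (-δ * t) * (c - p * x t) * (K₀ * Real.exp (-γ * t)))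
        < 0 :=
  cost_comparison_general p c r δ γ α x₁ xbar K₀ h hp hc hr hδ hγ hα hK₀ hh hcs x xb hx hxb hmx hmxb
end

section
/- Consider the adjoint equation λ' = (λ - r)κ - z u(t) + r' with κ > 0, r' = rκ, 0 ≤ u ≤ 1. If λ(τ) = r, λ'(τ) = 0 and u(τ) = 1 (forced by z(τ) = r' > 0), then z(τ) = r'. Moreover if additionally z'(τ) < 0 then λ''(τ) = -z'(τ) u(τ) > 0, contradicting the constraint λ(t) ≤ r near τ. -/
open Set Filter Topology

/-! Since `u τ = 1`, the equation at `τ` reads `0 = -z τ + r'`. As `u ≡ 1` near `τ`,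
differentiating the equation there gives `λ'' τ = λ' τ κ - z' τ = -z' τ > 0`. But `λ ≤ r = λ τ`
on `[0, ∞)` makes `τ > 0` a local maximum of `λ`, which forces `λ'' τ ≤ 0`. -/

/-- A positive second derivative would make `a` a local minimum as well, hence `f` locally
constant. -/
theorem IsLocalMax.deriv_deriv_nonpos {f : ℝ → ℝ} {a : ℝ} (h : IsLocalMax f a)
    (hc : ContinuousAt f a) : deriv (deriv f) a ≤ 0 := by
  by_contra! hpos
  have hmin : IsLocalMin f a := isLocalMin_of_deriv_deriv_pos hpos h.deriv_eq_zero hc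
  have hconst : f =ᶠ[𝓝 a] fun _ => f a := by
    filter_upwards [h, hmin] with t hmax hmin using le_antisymm hmax hmin
  have hderiv : deriv f =ᶠ[𝓝 a] fun _ => 0 := by
    filter_upwards [hconst.eventuallyEq_nhds] with t ht
    rw [ht.deriv_eq, deriv_const]
  rw [hderiv.deriv_eq, deriv_const] at hpos
  exact hpos.false

theorem deriv_deriv_eq_of_eventuallyEq_adjoint {f z : ℝ → ℝ} {a κ r c : ℝ}
    (hf : DifferentiableAt ℝ f a) (hz : DifferentiableAt ℝ z a)
    (h : deriv f =ᶠ[𝓝 a] fun t => (f t - r) * κ - z t + c) :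
    deriv (deriv f) a = deriv f a * κ - deriv z a := by
  rw [h.deriv_eq]
  exact ((((hf.hasDerivAt.sub_const r).mul_const κ).sub hz.hasDerivAt).add_const c).deriv

theorem second_order_exclusion_general (z lam u : ℝ → ℝ) (κ r r' τ : ℝ)
    (hτ : 0 < τ)
    (hunear : ∃ ε > 0, ∀ t ∈ Ioo (τ - ε) (τ + ε), u t = 1)
    (hzC1 : ContDiff ℝ 1 z) (hlamC2 : ContDiff ℝ 2 lam)
    (hode : ∀ t, 0 ≤ t → deriv lam t = (lam t - r) * κ - z t * u t + r')
    (hlamτ : lam τ = r) (hlam'τ : deriv lam τ = 0) (huτ : u τ = 1) :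
    z τ = r' ∧
      (deriv z τ < 0 →
        deriv (deriv lam) τ = -deriv z τ ∧ 0 < deriv (deriv lam) τ ∧
          ¬ ∀ t, 0 ≤ t → lam t ≤ r) := by
  have hzτ : z τ = r' := by
    have h := hode τ hτ.le
    rw [hlam'τ, hlamτ, huτ] at h
    linarith
  refine ⟨hzτ, fun hz' => ?_⟩
  obtain ⟨ε, hε, hu_one⟩ := hunear
  have hode_near : deriv lam =ᶠ[𝓝 τ] fun t => (lam t - r) * κ - z t + r' := by
    filter_upwards [Ioi_mem_nhds hτ, Ioo_mem_nhds (by linarith : τ - ε < τ)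
      (by linarith : τ < τ + ε)] with t ht hεt
    rw [hode t (le_of_lt ht), hu_one t hεt, mul_one]
  have hsecond : deriv (deriv lam) τ = -deriv z τ := by
    rw [deriv_deriv_eq_of_eventuallyEq_adjoint (hlamC2.differentiable two_ne_zero).differentiableAt
      (hzC1.differentiable one_ne_zero).differentiableAt hode_near, hlam'τ]
    ring
  refine ⟨hsecond, by linarith, fun hbound => ?_⟩
  have hmax : IsLocalMax lam τ := by
    filter_upwards [Ioi_mem_nhds hτ] with t ht
    exact hlamτ ▸ hbound t (le_of_lt ht)
  linarith [hmax.deriv_deriv_nonpos hlamC2.continuous.continuousAt]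

/-- For the adjoint equation `λ' = (λ - r) κ - z u + r'` with `κ > 0`, `r' = r κ`: if at
`τ > 0` one has `λ τ = r`, `λ' τ = 0` and `u ≡ 1` near `τ`, then `z τ = r'`; moreover if in
addition `z' τ < 0`, then `λ'' τ = -z' τ > 0` and the constraint `λ t ≤ r` for all `t ≥ 0`
cannot hold. -/
theorem second_order_exclusion (z lam u : ℝ → ℝ) (κ r r' τ : ℝ)
    (hκ : 0 < κ) (hr' : r' = r * κ) (hr'pos : 0 < r') (hτ : 0 < τ)
    (hu : ∀ t, 0 ≤ t → u t ∈ Icc (0:ℝ) 1)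
    (hunear : ∃ ε > 0, ∀ t ∈ Ioo (τ - ε) (τ + ε), u t = 1)
    (hzC1 : ContDiff ℝ 1 z) (hlamC2 : ContDiff ℝ 2 lam)
    (hode : ∀ t, 0 ≤ t → deriv lam t = (lam t - r) * κ - z t * u t + r')
    (hlamτ : lam τ = r) (hlam'τ : deriv lam τ = 0) (huτ : u τ = 1) :
    z τ = r' ∧
      (deriv z τ < 0 →
        deriv (deriv lam) τ = -deriv z τ ∧ 0 < deriv (deriv lam) τ ∧
          ¬ ∀ t, 0 ≤ t → lam t ≤ r) :=
  second_order_exclusion_general z lam u κ r r' τ hτ hunear hzC1 hlamC2 hode hlamτ hlam'τ huτ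
end
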